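/- For an equivariant LR skew tableau L with B = L|_μ and Δ(a) = ω(L^u_{≤a})_{|a|} - c(a) + r(a): if Δ(a) ≤ 0 for some a ∈ B, then there exists a barred entry b ∈ B in the same row as a with Δ(b) = 0. -/

import Mathlib

/-! Walk left along the row of `a`. Passing from `(r, c + 1)` to `(r, c)` the count
`ω_{|(r, c + 1)|}` drops by one exactly when `(r, c + 1)` is unbarred, and since
`|(r, c)| ≥ |(r, c + 1)|` the Yamanouchi property gives
`Δ(r, c) ≤ Δ(r, c + 1) + [(r, c + 1) barred]`. So `Δ ≤ 0` propagates to the left until it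
meets a barred cell with `Δ = 0`; it must do so by column `0`, where `Δ(r, 0) = ω + r ≥ 0`
with `ω ≥ 1` at an unbarred cell. -/

open scoped Classical
open MvPolynomial

noncomputable section

namespace EqLR

/-- Ambient polynomial ring `ℂ[x_1,…,x_d ; y_i (i ∈ ℤ)]`.
The variables `x_j` are indexed by `Fin d` (so `x_{j+1} = X (Sum.inl j)`), and the
variables `y_i` are indexed by `ℤ` (only positive indices actually occur). -/
abbrev P (d : ℕ) := MvPolynomial (Fin d ⊕ ℤ) ℂ

/-- The variable `y_i`. -/
def yI (d : ℕ) (i : ℤ) : P d := X (Sum.inr i)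

/-- The variable `x_v` for a value `v ∈ {1,…,d}` (junk value `0` otherwise). -/
def xv (d : ℕ) (v : ℕ) : P d :=
  if h : v - 1 < d then X (Sum.inl ⟨v - 1, h⟩) else 0

/-- The component `ξ_v` of a vector `ξ ∈ ℕ^d`, for a (1-based) value `v ∈ {1,…,d}`. -/
def vecAt {d : ℕ} (ξ : Fin d → ℕ) (v : ℕ) : ℕ :=
  if h : v - 1 < d then ξ ⟨v - 1, h⟩ else 0

/-- `μ ∈ ℕ^d` is a partition:  `μ_1 ≥ μ_2 ≥ … ≥ μ_d`. -/
def IsPartitionVec {d : ℕ} (μ : Fin d → ℕ) : Prop :=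
  ∀ i j : Fin d, i ≤ j → μ j ≤ μ i

/-- `|μ| = μ_1 + ⋯ + μ_d`. -/
def wt {d : ℕ} (μ : Fin d → ℕ) : ℕ := ∑ i, μ i

/-- `ρ = (d-1, d-2, …, 0)`. -/
def rho (d : ℕ) : Fin d → ℕ := fun i => d - 1 - (i : ℕ)

/-- Cells `(r, c)` (both 0-based) of the Young/reverse Young diagram whose row `r` has
length `μ_{r+1}`.  For the reverse diagram, rows are numbered bottom-to-top and columns
right-to-left; for the ordinary Young diagram, top-to-bottom and left-to-right. -/
def cells (d : ℕ) (μ : Fin d → ℕ) : Finset (ℕ × ℕ) :=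
  (Finset.range d ×ˢ Finset.range (Finset.univ.sup μ + 1)).filter
    fun rc => ∃ h : rc.1 < d, rc.2 < μ ⟨rc.1, h⟩

/-- In the column reading word of a *reverse* diagram (columns right-to-left, i.e. in
increasing 0-based column index, each column read top-to-bottom, i.e. in decreasing
0-based row index), the cell `b` is read strictly before the cell `a`. -/
def revBefore (a b : ℕ × ℕ) : Prop := b.2 < a.2 ∨ (b.2 = a.2 ∧ a.1 < b.1)

/-- In the column reading word of an ordinary Young diagram (rightmost column first,
each column read top-to-bottom), the cell `b` is read strictly before the cell `a`. -/
def youngBefore (a b : ℕ × ℕ) : Prop := a.2 < b.2 ∨ (b.2 = a.2 ∧ b.1 < a.1)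

/-- A reverse tableau of shape `μ`: entries in `{1,…,d}`, weakly increasing along rows
(left to right) and strictly increasing down columns (top to bottom). -/
structure RevTableau (d : ℕ) (μ : Fin d → ℕ) where
  val : ℕ × ℕ → ℕ
  mem : ∀ a ∈ cells d μ, 1 ≤ val a ∧ val a ≤ d
  zero : ∀ a ∉ cells d μ, val a = 0
  row : ∀ r c : ℕ, (r, c + 1) ∈ cells d μ → val (r, c + 1) ≤ val (r, c)
  col : ∀ r c : ℕ, (r + 1, c) ∈ cells d μ → val (r + 1, c) < val (r, c)

/-- The factor `x_v - y_{(d+1-v) + c(a) - r(a)}` attached to an entry of value `v` in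
the cell `a` of the reverse diagram (`c(a) = a.2 + 1`, `r(a) = a.1 + 1`, 1-based). -/
def factor (d : ℕ) (v : ℕ) (a : ℕ × ℕ) : P d :=
  xv d v - yI d ((d : ℤ) + 1 - (v : ℤ) + (a.2 : ℤ) - (a.1 : ℤ))

/-- The factorial Schur function `s_μ(x|y) = Σ_R (x|y)^R`. -/
def fSchur (d : ℕ) (μ : Fin d → ℕ) : P d :=
  ∑ᶠ R : RevTableau d μ, ∏ a ∈ cells d μ, factor d (R.val a) a

/-- The ordinary Schur function `s_μ(x) = Σ_R x^R`. -/
def schurX (d : ℕ) (μ : Fin d → ℕ) : P d :=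
  ∑ᶠ R : RevTableau d μ, ∏ a ∈ cells d μ, xv d (R.val a)

/-- The subalgebra `ℂ[y]` of polynomials in the `y` variables only. -/
def ySub (d : ℕ) : Subalgebra ℂ (P d) :=
  Algebra.adjoin ℂ (Set.range fun i : ℤ => yI d i)

/-- `p` is symmetric in the `x` variables. -/
def SymmX {d : ℕ} (p : P d) : Prop :=
  ∀ σ : Equiv.Perm (Fin d), rename (⇑(Equiv.sumCongr σ (Equiv.refl ℤ))) p = p

/-- The falling factorial power `(x_j | y)^k = (x_j - y_1)⋯(x_j - y_k)`. -/
def ffPow (d : ℕ) (j : Fin d) (k : ℕ) : P d :=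
  ∏ i ∈ Finset.range k, (X (Sum.inl j) - yI d ((i : ℤ) + 1))

/-- `(x|y)^ξ = (x_1|y)^{ξ_1} ⋯ (x_d|y)^{ξ_d}`. -/
def xyPow (d : ℕ) (ξ : Fin d → ℕ) : P d := ∏ j : Fin d, ffPow d j (ξ j)

/-- The alternant `a_ξ(x|y) = det[(x_j|y)^{ξ_i}]`. -/
def aDet (d : ℕ) (ξ : Fin d → ℕ) : P d :=
  Matrix.det (Matrix.of fun i j : Fin d => ffPow d j (ξ i))

/-! ### Skew barred tableaux of shape `λ*μ` -/

/-- A skew barred tableau of shape `λ*μ`: the Young diagram `λ` (placed above and to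
the right of the reverse diagram `μ`) is filled with values in `{1,…,d}` (field `top`),
the reverse diagram `μ` is filled with values in `{1,…,d}` (field `bot`), some of whose
cells may be barred (field `barred`); values weakly increase along rows left-to-right
and strictly increase down columns, ignoring bars. -/
structure SkewBarredTableau (d : ℕ) (lam mu : Fin d → ℕ) where
  top : ℕ × ℕ → ℕ
  bot : ℕ × ℕ → ℕ
  barred : ℕ × ℕ → Prop
  top_mem : ∀ a ∈ cells d lam, 1 ≤ top a ∧ top a ≤ d
  top_zero : ∀ a ∉ cells d lam, top a = 0
  bot_mem : ∀ a ∈ cells d mu, 1 ≤ bot a ∧ bot a ≤ d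
  bot_zero : ∀ a ∉ cells d mu, bot a = 0
  barred_sub : ∀ a, barred a → a ∈ cells d mu
  top_row : ∀ r c : ℕ, (r, c + 1) ∈ cells d lam → top (r, c) ≤ top (r, c + 1)
  top_col : ∀ r c : ℕ, (r + 1, c) ∈ cells d lam → top (r, c) < top (r + 1, c)
  bot_row : ∀ r c : ℕ, (r, c + 1) ∈ cells d mu → bot (r, c + 1) ≤ bot (r, c)
  bot_col : ∀ r c : ℕ, (r + 1, c) ∈ cells d mu → bot (r + 1, c) < bot (r, c)

namespace SkewBarredTableau

variable {d : ℕ} {lam mu : Fin d → ℕ}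

/-- `ω(L^u_{<a})_k`: the number of `k`'s among the unbarred entries of `L` read strictly
before the `μ`-cell `a` in the unbarred column word (all of `λ` is read before `μ`). -/
def countBefore (L : SkewBarredTableau d lam mu) (a : ℕ × ℕ) (k : ℕ) : ℕ :=
  ((cells d lam).filter fun b => L.top b = k).card +
  ((cells d mu).filter fun b => ¬ L.barred b ∧ L.bot b = k ∧ revBefore a b).card

/-- `ω(L^u_{≤a})_k`: as `countBefore`, but the entry of `a` itself is also counted when
`a` is unbarred. -/
def countUpTo (L : SkewBarredTableau d lam mu) (a : ℕ × ℕ) (k : ℕ) : ℕ :=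
  ((cells d lam).filter fun b => L.top b = k).card +
  ((cells d mu).filter fun b => ¬ L.barred b ∧ L.bot b = k ∧ (revBefore a b ∨ b = a)).card

/-- Prefix content within the `λ`-part of the word. -/
def topCountUpTo (L : SkewBarredTableau d lam mu) (a : ℕ × ℕ) (k : ℕ) : ℕ :=
  ((cells d lam).filter fun b => L.top b = k ∧ (youngBefore a b ∨ b = a)).card

/-- `ω(L^u)_k`: total content of the unbarred column word of `L`. -/
def content (L : SkewBarredTableau d lam mu) (k : ℕ) : ℕ :=
  ((cells d lam).filter fun b => L.top b = k).card +
  ((cells d mu).filter fun b => ¬ L.barred b ∧ L.bot b = k).card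

/-- The unbarred column word of `L` is Yamanouchi: every prefix contains at least as
many `k`'s as `(k+1)`'s, for every `k ≥ 1`. -/
def Yamanouchi (L : SkewBarredTableau d lam mu) : Prop :=
  (∀ a ∈ cells d lam, ∀ k : ℕ, 1 ≤ k → L.topCountUpTo a (k + 1) ≤ L.topCountUpTo a k) ∧
  (∀ a ∈ cells d mu, ¬ L.barred a → ∀ k : ℕ, 1 ≤ k →
      L.countUpTo a (k + 1) ≤ L.countUpTo a k)

/-- `L` is an equivariant Littlewood–Richardson skew tableau of shape `λ*μ` and unbarred
content `ν`. -/
def IsLR (L : SkewBarredTableau d lam mu) (ν : Fin d → ℕ) : Prop :=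
  L.Yamanouchi ∧ ∀ i : Fin d, L.content ((i : ℕ) + 1) = ν i

/-- The index `|a|' + ω(L^u_{<a})_{|a|}` of the first `y` in the factor of `c_L` at a
barred cell `a`. -/
def eIdx (L : SkewBarredTableau d lam mu) (a : ℕ × ℕ) : ℤ :=
  ((d : ℤ) + 1 - (L.bot a : ℤ)) + (L.countBefore a (L.bot a) : ℤ)

/-- The index `|a|' + c(a) - r(a)` of the second `y` in the factor of `c_L` at a barred
cell `a`. -/
def fIdx (L : SkewBarredTableau d lam mu) (a : ℕ × ℕ) : ℤ :=
  ((d : ℤ) + 1 - (L.bot a : ℤ)) + (a.2 : ℤ) - (a.1 : ℤ)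

/-- The weight `c_L = ∏_{a barred} (y_{|a|'+ω(L^u_{<a})_{|a|}} - y_{|a|'+c(a)-r(a)})`. -/
def cWt (L : SkewBarredTableau d lam mu) : P d :=
  ∏ a ∈ (cells d mu).filter (fun a => L.barred a), (yI d (L.eIdx a) - yI d (L.fIdx a))

/-- `Δ(a) = ω(L^u_{≤a})_{|a|} - c(a) + r(a)`. -/
def Δ (L : SkewBarredTableau d lam mu) (a : ℕ × ℕ) : ℤ :=
  (L.countUpTo a (L.bot a) : ℤ) - ((a.2 : ℤ) + 1) + ((a.1 : ℤ) + 1)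

end SkewBarredTableau

/-! ### Reverse barred tableaux -/

/-- A reverse barred tableau of shape `μ`. -/
structure RevBarredTableau (d : ℕ) (μ : Fin d → ℕ) where
  val : ℕ × ℕ → ℕ
  barred : ℕ × ℕ → Prop
  mem : ∀ a ∈ cells d μ, 1 ≤ val a ∧ val a ≤ d
  zero : ∀ a ∉ cells d μ, val a = 0
  barred_sub : ∀ a, barred a → a ∈ cells d μ
  row : ∀ r c : ℕ, (r, c + 1) ∈ cells d μ → val (r, c + 1) ≤ val (r, c)
  col : ∀ r c : ℕ, (r + 1, c) ∈ cells d μ → val (r + 1, c) < val (r, c)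

namespace RevBarredTableau

variable {d : ℕ} {μ : Fin d → ℕ}

/-- `ω(B^u_{<a})_k`. -/
def countBefore (B : RevBarredTableau d μ) (a : ℕ × ℕ) (k : ℕ) : ℕ :=
  ((cells d μ).filter fun b => ¬ B.barred b ∧ B.val b = k ∧ revBefore a b).card

/-- `ω(B^u_{≤a})_k` (including `a` itself when unbarred). -/
def countUpTo (B : RevBarredTableau d μ) (a : ℕ × ℕ) (k : ℕ) : ℕ :=
  ((cells d μ).filter fun b => ¬ B.barred b ∧ B.val b = k ∧ (revBefore a b ∨ b = a)).card

/-- `ω(B^u)_k`. -/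
def content (B : RevBarredTableau d μ) (k : ℕ) : ℕ :=
  ((cells d μ).filter fun b => ¬ B.barred b ∧ B.val b = k).card

/-- `e_{ξ,B}(a) = (ξ + ω(B^u_{<a}))_{|a|}`. -/
def eIdx (B : RevBarredTableau d μ) (ξ : Fin d → ℕ) (a : ℕ × ℕ) : ℤ :=
  (vecAt ξ (B.val a) : ℤ) + (B.countBefore a (B.val a) : ℤ)

/-- `f_B(a) = |a|' + c(a) - r(a)`. -/
def fIdx (B : RevBarredTableau d μ) (a : ℕ × ℕ) : ℤ :=
  ((d : ℤ) + 1 - (B.val a : ℤ)) + (a.2 : ℤ) - (a.1 : ℤ)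

/-- `c_{ξ,B} = ∏_{a barred} (y_{e_{ξ,B}(a)} - y_{f_B(a)})`. -/
def cXi (B : RevBarredTableau d μ) (ξ : Fin d → ℕ) : P d :=
  ∏ a ∈ (cells d μ).filter (fun a => B.barred a), (yI d (B.eIdx ξ a) - yI d (B.fIdx a))

/-- The unbarred column word of `λ*B` is Yamanouchi (the `λ`-part is the canonical
filling of `λ`, whose whole content `λ` is added to every prefix of `B^u`). -/
def StarYam (B : RevBarredTableau d μ) (lam : Fin d → ℕ) : Prop :=
  ∀ a ∈ cells d μ, ¬ B.barred a → ∀ k : ℕ, 1 ≤ k →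
    vecAt lam (k + 1) + B.countUpTo a (k + 1) ≤ vecAt lam k + B.countUpTo a k

end RevBarredTableau

/-! ### Reverse hatted tableaux -/

/-- A hat decoration: none, left hat, or right hat. -/
inductive Hat where
  | unhatted : Hat
  | left : Hat
  | right : Hat
deriving DecidableEq

/-- A reverse hatted tableau of shape `μ`. -/
structure RevHattedTableau (d : ℕ) (μ : Fin d → ℕ) where
  val : ℕ × ℕ → ℕ
  hat : ℕ × ℕ → Hat
  mem : ∀ a ∈ cells d μ, 1 ≤ val a ∧ val a ≤ d
  zero : ∀ a ∉ cells d μ, val a = 0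
  hat_out : ∀ a ∉ cells d μ, hat a = Hat.unhatted
  row : ∀ r c : ℕ, (r, c + 1) ∈ cells d μ → val (r, c + 1) ≤ val (r, c)
  col : ∀ r c : ℕ, (r + 1, c) ∈ cells d μ → val (r + 1, c) < val (r, c)

namespace RevHattedTableau

variable {d : ℕ} {μ : Fin d → ℕ}

/-- `ω(H^u_{<a})_k`: content of the unhatted column word of `H` read before `a`. -/
def countBefore (H : RevHattedTableau d μ) (a : ℕ × ℕ) (k : ℕ) : ℕ :=
  ((cells d μ).filter fun b => H.hat b = Hat.unhatted ∧ H.val b = k ∧ revBefore a b).card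

/-- `ω(H^u)_k`. -/
def content (H : RevHattedTableau d μ) (k : ℕ) : ℕ :=
  ((cells d μ).filter fun b => H.hat b = Hat.unhatted ∧ H.val b = k).card

/-- `e_{ξ,H}(a) = (ξ + ω(H^u_{<a}))_{|a|}`. -/
def eIdx (H : RevHattedTableau d μ) (ξ : Fin d → ℕ) (a : ℕ × ℕ) : ℤ :=
  (vecAt ξ (H.val a) : ℤ) + (H.countBefore a (H.val a) : ℤ)

/-- `f_H(a) = |a|' + c(a) - r(a)`. -/
def fIdx (H : RevHattedTableau d μ) (a : ℕ × ℕ) : ℤ :=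
  ((d : ℤ) + 1 - (H.val a : ℤ)) + (a.2 : ℤ) - (a.1 : ℤ)

/-- `d_{ξ,H} = ∏_{a ∈ H^l} y_{e_{ξ,H}(a)} · ∏_{a ∈ H^r} (-y_{f_H(a)})`. -/
def dWt (H : RevHattedTableau d μ) (ξ : Fin d → ℕ) : P d :=
  (∏ a ∈ (cells d μ).filter (fun a => H.hat a = Hat.left), yI d (H.eIdx ξ a)) *
  ∏ a ∈ (cells d μ).filter (fun a => H.hat a = Hat.right), (-(yI d (H.fIdx a)))

end RevHattedTableau

/-- `H̄ = B`: `H` unbars to the reverse barred tableau `B`. -/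
def UnbarsTo {d : ℕ} {μ : Fin d → ℕ} (H : RevHattedTableau d μ)
    (B : RevBarredTableau d μ) : Prop :=
  H.val = B.val ∧ ∀ a, (H.hat a ≠ Hat.unhatted ↔ B.barred a)

/-- The simple transposition `σ_i` on values: exchanges `i` and `i+1`. -/
def swapVal (i v : ℕ) : ℕ := if v = i then i + 1 else if v = i + 1 then i else v

/-- The action of `σ_i` on `ℕ^d` by permuting coordinates. -/
def swapVec {d : ℕ} (i : ℕ) (ξ : Fin d → ℕ) : Fin d → ℕ :=
  fun j => vecAt ξ (swapVal i ((j : ℕ) + 1))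

/-! ### Reverse (barred) subtableaux -/

/-- A reverse subtableau of shape `μ`: each cell is empty (value `0`) or carries a value
in `{1,…,d}`; no row or column conditions. -/
structure RevSubTableau (d : ℕ) (μ : Fin d → ℕ) where
  val : ℕ × ℕ → ℕ
  mem : ∀ a ∈ cells d μ, val a ≤ d
  zero : ∀ a ∉ cells d μ, val a = 0

/-- A reverse barred subtableau of shape `μ`: a reverse subtableau some of whose filled
cells are barred. -/
structure RevBarredSubTableau (d : ℕ) (μ : Fin d → ℕ) where
  val : ℕ × ℕ → ℕ
  barred : ℕ × ℕ → Prop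
  mem : ∀ a ∈ cells d μ, val a ≤ d
  zero : ∀ a ∉ cells d μ, val a = 0
  barred_filled : ∀ a, barred a → a ∈ cells d μ ∧ val a ≠ 0

/-- `(x|y)^R` for a reverse subtableau `R`. -/
def RevSubTableau.xyProd {d : ℕ} {μ : Fin d → ℕ} (R : RevSubTableau d μ) : P d :=
  ∏ a ∈ (cells d μ).filter (fun a => R.val a ≠ 0), factor d (R.val a) a

namespace RevBarredSubTableau

variable {d : ℕ} {μ : Fin d → ℕ}

/-- `ω(B^u_{<a})_k`: unbarred filled entries of value `k` read before `a`. -/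
def countBefore (B : RevBarredSubTableau d μ) (a : ℕ × ℕ) (k : ℕ) : ℕ :=
  ((cells d μ).filter fun b => ¬ B.barred b ∧ B.val b = k ∧ revBefore a b).card

/-- `ω(B^u)_k`. -/
def content (B : RevBarredSubTableau d μ) (k : ℕ) : ℕ :=
  ((cells d μ).filter fun b => ¬ B.barred b ∧ B.val b = k).card

/-- `e_{ξ,B}(a) = (ξ + ω(B^u_{<a}))_{|a|}`. -/
def eIdx (B : RevBarredSubTableau d μ) (ξ : Fin d → ℕ) (a : ℕ × ℕ) : ℤ :=
  (vecAt ξ (B.val a) : ℤ) + (B.countBefore a (B.val a) : ℤ)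

/-- `f_B(a) = |a|' + c(a) - r(a)`. -/
def fIdx (B : RevBarredSubTableau d μ) (a : ℕ × ℕ) : ℤ :=
  ((d : ℤ) + 1 - (B.val a : ℤ)) + (a.2 : ℤ) - (a.1 : ℤ)

/-- `c_{ξ,B}`. -/
def cXi (B : RevBarredSubTableau d μ) (ξ : Fin d → ℕ) : P d :=
  ∏ a ∈ (cells d μ).filter (fun a => B.barred a), (yI d (B.eIdx ξ a) - yI d (B.fIdx a))

end RevBarredSubTableau

end EqLR

namespace EqLR

lemma mem_cells {d : ℕ} {μ : Fin d → ℕ} {a : ℕ × ℕ} :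
    a ∈ cells d μ ↔ ∃ h : a.1 < d, a.2 < μ ⟨a.1, h⟩ := by
  refine ⟨fun h => (Finset.mem_filter.mp h).2, fun ⟨h₁, h₂⟩ => Finset.mem_filter.mpr ⟨?_, h₁, h₂⟩⟩
  refine Finset.mem_product.mpr ⟨Finset.mem_range.mpr h₁, Finset.mem_range.mpr ?_⟩
  exact Nat.lt_succ_of_lt (h₂.trans_le (Finset.le_sup (Finset.mem_univ _)))

lemma mem_cells_of_col_succ {d : ℕ} {μ : Fin d → ℕ} {r c : ℕ} (h : (r, c + 1) ∈ cells d μ) :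
    (r, c) ∈ cells d μ := by
  obtain ⟨h₁, h₂⟩ := mem_cells.mp h
  exact mem_cells.mpr ⟨h₁, Nat.lt_of_succ_lt h₂⟩

lemma mem_cells_of_row_le {d : ℕ} {μ : Fin d → ℕ} (hμ : IsPartitionVec μ) {r₁ r₂ c : ℕ}
    (hr : r₁ ≤ r₂) (h : (r₂, c) ∈ cells d μ) : (r₁, c) ∈ cells d μ := by
  obtain ⟨h₁, h₂⟩ := mem_cells.mp h
  have h₁' : r₁ < d := hr.trans_lt h₁
  exact mem_cells.mpr ⟨h₁', h₂.trans_le (hμ ⟨r₁, h₁'⟩ ⟨r₂, h₁⟩ hr)⟩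

def revKey (a : ℕ × ℕ) : ℕ ×ₗ ℤ := toLex (a.2, -(a.1 : ℤ))

lemma revBefore_or_eq_iff {a b : ℕ × ℕ} : revBefore a b ∨ b = a ↔ revKey b ≤ revKey a := by
  simp only [revBefore, revKey, Prod.Lex.toLex_le_toLex, Prod.ext_iff]
  omega

def youngKey (a : ℕ × ℕ) : ℤ ×ₗ ℕ := toLex (-(a.2 : ℤ), a.1)

lemma youngBefore_or_eq_iff {a b : ℕ × ℕ} :
    youngBefore a b ∨ b = a ↔ youngKey b ≤ youngKey a := by
  simp only [youngBefore, youngKey, Prod.Lex.toLex_le_toLex, Prod.ext_iff]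
  omega

namespace SkewBarredTableau

variable {d : ℕ} {lam mu : Fin d → ℕ} (L : SkewBarredTableau d lam mu)

lemma bot_lt_bot_of_row_lt (hmu : IsPartitionVec mu) {r₁ r₂ c : ℕ} (hr : r₁ < r₂)
    (h : (r₂, c) ∈ cells d mu) : L.bot (r₂, c) < L.bot (r₁, c) := by
  induction r₂, hr using Nat.le_induction with
  | base => exact L.bot_col r₁ c h
  | succ n _ ih =>
    exact (L.bot_col n c h).trans (ih (mem_cells_of_row_le hmu n.le_succ h))

lemma one_le_countUpTo_self {a : ℕ × ℕ} (ha : a ∈ cells d mu) (hnb : ¬ L.barred a) :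
    1 ≤ L.countUpTo a (L.bot a) := by
  have : 0 < ((cells d mu).filter fun b =>
      ¬ L.barred b ∧ L.bot b = L.bot a ∧ (revBefore a b ∨ b = a)).card :=
    Finset.card_pos.mpr ⟨a, Finset.mem_filter.mpr ⟨ha, hnb, rfl, Or.inr rfl⟩⟩
  unfold countUpTo
  omega

lemma card_top_succ_le (hY : L.Yamanouchi) {k : ℕ} (hk : 1 ≤ k) :
    ((cells d lam).filter fun b => L.top b = k + 1).card ≤
      ((cells d lam).filter fun b => L.top b = k).card := by
  obtain hempty | ⟨m, hm, hmax⟩ :=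
    (cells d lam).eq_empty_or_nonempty.imp id ((cells d lam).exists_max_image youngKey)
  · simp [hempty]
  have hall : ∀ j, L.topCountUpTo m j = ((cells d lam).filter fun b => L.top b = j).card := by
    intro j
    unfold topCountUpTo
    congr 1
    exact Finset.filter_congr fun b hb => by simp only [youngBefore_or_eq_iff, hmax b hb, and_true]
  simpa only [hall] using hY.1 m hm k hk

/-- The prefix ending at `w` has the same unbarred content as the prefix ending at its last
unbarred cell, or as the `λ`-part of the word if it has none. -/
lemma countUpTo_succ_le (hY : L.Yamanouchi) (w : ℕ × ℕ) {k : ℕ} (hk : 1 ≤ k) :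
    L.countUpTo w (k + 1) ≤ L.countUpTo w k := by
  set S := (cells d mu).filter fun b => ¬ L.barred b ∧ revKey b ≤ revKey w
  obtain hempty | ⟨m, hm, hmax⟩ := S.eq_empty_or_nonempty.imp id (S.exists_max_image revKey)
  · have hnone : ∀ j, ((cells d mu).filter fun b =>
        ¬ L.barred b ∧ L.bot b = j ∧ (revBefore w b ∨ b = w)) = ∅ := by
      intro j
      rw [Finset.filter_eq_empty_iff] at hempty ⊢
      exact fun b hb ⟨hnb, _, hw⟩ => hempty hb ⟨hnb, revBefore_or_eq_iff.mp hw⟩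
    simpa [countUpTo, hnone] using L.card_top_succ_le hY hk
  obtain ⟨hmc, hmb, hmw⟩ := Finset.mem_filter.mp hm
  have hsame : ∀ j, L.countUpTo w j = L.countUpTo m j := by
    intro j
    unfold countUpTo
    congr 2
    refine Finset.filter_congr fun b hb => ?_
    simp only [revBefore_or_eq_iff]
    exact ⟨fun ⟨hnb, hj, hw⟩ => ⟨hnb, hj, hmax b (Finset.mem_filter.mpr ⟨hb, hnb, hw⟩)⟩,
      fun ⟨hnb, hj, hbm⟩ => ⟨hnb, hj, hbm.trans hmw⟩⟩
  rw [hsame, hsame]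
  exact hY.2 m hmc hmb k hk

lemma countUpTo_le_countUpTo (hY : L.Yamanouchi) (w : ℕ × ℕ) {j k : ℕ} (hj : 1 ≤ j)
    (hjk : j ≤ k) : L.countUpTo w k ≤ L.countUpTo w j := by
  induction k, hjk using Nat.le_induction with
  | base => exact le_rfl
  | succ k hjk ih => exact (L.countUpTo_succ_le hY w (hj.trans hjk)).trans ih

/-- Between the positions `(r, c)` and `(r, c + 1)` the word reads the cells of column `c`
above row `r`, of column `c + 1` below row `r`, and `(r, c + 1)` itself; by column
strictness only the last can carry the value `|(r, c + 1)|`. -/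
lemma countUpTo_col_succ (hmu : IsPartitionVec mu) {r c : ℕ} (hc : (r, c + 1) ∈ cells d mu) :
    L.countUpTo (r, c + 1) (L.bot (r, c + 1)) =
      L.countUpTo (r, c) (L.bot (r, c + 1)) + if L.barred (r, c + 1) then 0 else 1 := by
  set v := L.bot (r, c + 1) with hv
  have hread : ∀ b ∈ cells d mu, L.bot b = v →
      (revBefore (r, c + 1) b ∨ b = (r, c + 1) ↔
        (revBefore (r, c) b ∨ b = (r, c)) ∨ b = (r, c + 1)) := by
    rintro ⟨i, j⟩ hb hbv
    have hcol : ¬ (j = c ∧ i < r) := by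
      rintro ⟨rfl, hi⟩
      have := L.bot_lt_bot_of_row_lt hmu hi (mem_cells_of_col_succ hc)
      have := L.bot_row r j hc
      omega
    have hcol' : ¬ (j = c + 1 ∧ r < i) := by
      rintro ⟨rfl, hi⟩
      have := L.bot_lt_bot_of_row_lt hmu hi hb
      omega
    simp only [revBefore, Prod.ext_iff]
    omega
  unfold countUpTo
  rw [add_assoc]
  congr 1
  simp only [Finset.card_filter]
  rw [← Finset.sum_ite_eq_of_mem' (cells d mu) (r, c + 1)
    (fun _ => if L.barred (r, c + 1) then 0 else 1) hc, ← Finset.sum_add_distrib]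
  refine Finset.sum_congr rfl fun b hb => ?_
  by_cases hbx : b = (r, c + 1)
  · subst hbx
    by_cases hbar : L.barred (r, c + 1) <;> simp [revBefore, hv, hbar]
  by_cases hbv : L.bot b = v
  · have hsame := hread b hb hbv
    simp only [hbx, or_false] at hsame
    simp only [hsame, hbx, or_false, if_false, add_zero]
  · simp [hbv, hbx]

lemma Δ_col_succ_le (hmu : IsPartitionVec mu) (hY : L.Yamanouchi) {r c : ℕ}
    (hc : (r, c + 1) ∈ cells d mu) :
    L.Δ (r, c) ≤ L.Δ (r, c + 1) + if L.barred (r, c + 1) then 1 else 0 := by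
  have hstep := L.countUpTo_col_succ hmu hc
  have hanti := L.countUpTo_le_countUpTo hY (r, c) (L.bot_mem _ hc).1 (L.bot_row r c hc)
  unfold Δ
  split_ifs at hstep ⊢ <;> push_cast <;> omega

end SkewBarredTableau

theorem delta_nonpos_row_general (d : ℕ)
    (lam mu nu : Fin d → ℕ)
    (hmu : IsPartitionVec mu)
    (L : SkewBarredTableau d lam mu) (hL : L.IsLR nu)
    (a : ℕ × ℕ) (ha : a ∈ cells d mu) (h : L.Δ a ≤ 0) :
    ∃ b ∈ cells d mu, b.1 = a.1 ∧ L.barred b ∧ L.Δ b = 0 := by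
  obtain ⟨r, c⟩ := a
  induction c with
  | zero =>
    unfold SkewBarredTableau.Δ at h
    by_cases hb : L.barred (r, 0)
    · exact ⟨(r, 0), ha, rfl, hb, by unfold SkewBarredTableau.Δ; omega⟩
    · have := L.one_le_countUpTo_self ha hb
      omega
  | succ c ih =>
    have hle := L.Δ_col_succ_le hmu hL.1 ha
    by_cases hb : L.barred (r, c + 1)
    · by_cases h0 : L.Δ (r, c + 1) = 0
      · exact ⟨(r, c + 1), ha, rfl, hb, h0⟩
      · rw [if_pos hb] at hle
        exact ih (mem_cells_of_col_succ ha) (by omega)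
    · rw [if_neg hb] at hle
      exact ih (mem_cells_of_col_succ ha) (by omega)

/-- If `Δ(a) ≤ 0` for some cell `a` of `μ`, then there is a barred entry
`b` in the same row as `a` with `Δ(b) = 0`. -/
theorem delta_nonpos_row (d : ℕ) (hd : 1 ≤ d)
    (lam mu nu : Fin d → ℕ)
    (hlam : IsPartitionVec lam) (hmu : IsPartitionVec mu) (hnu : IsPartitionVec nu)
    (L : SkewBarredTableau d lam mu) (hL : L.IsLR nu)
    (a : ℕ × ℕ) (ha : a ∈ cells d mu) (h : L.Δ a ≤ 0) :
    ∃ b ∈ cells d mu, b.1 = a.1 ∧ L.barred b ∧ L.Δ b = 0 :=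
  delta_nonpos_row_general d lam mu nu hmu L hL a ha h

end EqLR
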